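/- With [s]_x = 1 - x^s, T_s = T [s]_x [s+3]_x/([s+1]_x [s+2]_x), T = (1+4x+x^2)/(1+x+x^2), g = x(1+x+x^2)/(1+4x+x^2)^2, X_{s,t} = ([3]_x [s+1]_x [t+1]_x [s+t+3]_x)/([1]_x [s+3]_x [t+3]_x [s+t+1]_x), and Y_{s,t,u} = ([s+3]_x [t+3]_x [u+3]_x [s+t+u+3]_x)/([3]_x [s+t+3]_x [t+u+3]_x [u+s+3]_x), the identity Y_{s,t,u} = 1 + g^3 T_s T_t T_u X_{s+1,t+1} X_{s+1,u+1} X_{t+1,u+1} T_{s+1} T_{t+1} T_{u+1} Y_{s+1,t+1,u+1} holds as an identity of rational functions in x, for all natural numbers s, t, u. -/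

import Mathlib

noncomputable section

/-- The field of rational functions in one variable over ℚ. -/
abbrev K := RatFunc ℚ

/-- The formal variable x. -/
def x : K := RatFunc.X

/-- [s]_x = 1 - x^s. -/
def br (s : ℕ) : K := 1 - x ^ s

/-- T = (1+4x+x²)/(1+x+x²). -/
def T : K := (1 + 4 * x + x ^ 2) / (1 + x + x ^ 2)

/-- g = x(1+x+x²)/(1+4x+x²)². -/
def g : K := x * (1 + x + x ^ 2) / (1 + 4 * x + x ^ 2) ^ 2

/-- T_s = T [s]_x [s+3]_x / ([s+1]_x [s+2]_x). -/
def Ts (s : ℕ) : K := T * br s * br (s + 3) / (br (s + 1) * br (s + 2))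

/-- N_{s,t}. -/
def N (s t : ℕ) : K :=
  br 3 * br (s + 2) * br (t + 2) * br (s + t + 3) /
    (br 2 * br (s + 3) * br (t + 3) * br (s + t + 2))

/-- X_{s,t}. -/
def Xc (s t : ℕ) : K :=
  br 3 * br (s + 1) * br (t + 1) * br (s + t + 3) /
    (br 1 * br (s + 3) * br (t + 3) * br (s + t + 1))

/-- Y_{s,t,u}. -/
def Y (s t u : ℕ) : K :=
  br (s + 3) * br (t + 3) * br (u + 3) * br (s + t + u + 3) /
    (br 3 * br (s + t + 3) * br (t + u + 3) * br (u + s + 3))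

/-!
Put a = x^s, b = x^t, c = x^u. The numerator of Y_{s,t,u} exceeds its denominator by
x³(1 - a)(1 - b)(1 - c)(1 - x⁶abc), so Y_{s,t,u} - 1 is that quantity over the denominator.
On the right-hand side, g T² = x [1]_x / [3]_x, and the product telescopes: each pair
T_s T_{s+1} leaves [s]_x [s+4]_x / [s+2]_x², and the three X-factors together with
Y_{s+1,t+1,u+1} cancel everything except the same quotient.
-/

theorem br_ne_zero {n : ℕ} (hn : n ≠ 0) : br n ≠ 0 := by
  have : br n = -algebraMap (Polynomial ℚ) K (Polynomial.X ^ n - Polynomial.C 1) := by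
    simp [br, x]
  rw [this, neg_ne_zero]
  exact RatFunc.algebraMap_ne_zero (Polynomial.X_pow_sub_C_ne_zero (Nat.pos_of_ne_zero hn) 1)

@[simp] theorem br_add_one_ne_zero (n : ℕ) : br (n + 1) ≠ 0 := br_ne_zero n.succ_ne_zero

theorem br_three : br 3 = br 1 * (1 + x + x ^ 2) := by
  simp only [br]; ring

theorem one_add_four_x_add_x_sq_ne_zero : (1 + 4 * x + x ^ 2 : K) ≠ 0 := by
  have : (1 + 4 * x + x ^ 2 : K) =
      algebraMap (Polynomial ℚ) K (1 + 4 * Polynomial.X + Polynomial.X ^ 2) := by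
    simp [x, map_ofNat]
  rw [this]
  refine RatFunc.algebraMap_ne_zero fun h => ?_
  simpa using congrArg (Polynomial.coeff · 0) h

theorem g_mul_T_sq : g * T ^ 2 = x * br 1 / br 3 := by
  have hQ := one_add_four_x_add_x_sq_ne_zero
  have hP : (1 + x + x ^ 2 : K) ≠ 0 := right_ne_zero_of_mul (br_three ▸ br_add_one_ne_zero 2)
  rw [g, T, br_three]
  generalize (1 + 4 * x + x ^ 2 : K) = Q at *
  field_simp

theorem g_mul_Ts_mul_Ts_add_one (s : ℕ) :
    g * Ts s * Ts (s + 1) = x * br 1 * br s * br (s + 4) / (br 3 * br (s + 2) ^ 2) := by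
  calc g * Ts s * Ts (s + 1)
      = g * T ^ 2 * (br s * br (s + 3) * br (s + 1) * br (s + 4)
          / (br (s + 1) * br (s + 2) * br (s + 2) * br (s + 3))) := by
        simp only [Ts]; ring
    _ = _ := by
        rw [g_mul_T_sq]
        field_simp

theorem Xc_add_one_add_one (s t : ℕ) :
    Xc (s + 1) (t + 1) = br 3 * br (s + 2) * br (t + 2) * br (s + t + 5) /
      (br 1 * br (s + 4) * br (t + 4) * br (s + t + 3)) := by
  rw [Xc, show s + 1 + (t + 1) + 3 = s + t + 5 by ring, show s + 1 + (t + 1) + 1 = s + t + 3 by ring]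

theorem Y_add_one (s t u : ℕ) :
    Y (s + 1) (t + 1) (u + 1) = br (s + 4) * br (t + 4) * br (u + 4) * br (s + t + u + 6) /
      (br 3 * br (s + t + 5) * br (t + u + 5) * br (u + s + 5)) := by
  rw [Y, show s + 1 + (t + 1) + (u + 1) + 3 = s + t + u + 6 by ring,
    show s + 1 + (t + 1) + 3 = s + t + 5 by ring, show t + 1 + (u + 1) + 3 = t + u + 5 by ring,
    show u + 1 + (s + 1) + 3 = u + s + 5 by ring]

theorem g_pow_three_mul_Ts_Xc_Y_eq (s t u : ℕ) :
    g ^ 3 * Ts s * Ts t * Ts u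
      * Xc (s + 1) (t + 1) * Xc (s + 1) (u + 1) * Xc (t + 1) (u + 1)
      * Ts (s + 1) * Ts (t + 1) * Ts (u + 1) * Y (s + 1) (t + 1) (u + 1)
      = x ^ 3 * br s * br t * br u * br (s + t + u + 6) /
          (br 3 * br (s + t + 3) * br (t + u + 3) * br (u + s + 3)) := by
  calc _ = g * Ts s * Ts (s + 1) * (g * Ts t * Ts (t + 1)) * (g * Ts u * Ts (u + 1))
      * Xc (s + 1) (t + 1) * Xc (s + 1) (u + 1) * Xc (t + 1) (u + 1)
      * Y (s + 1) (t + 1) (u + 1) := by ring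
    _ = _ := by
      rw [g_mul_Ts_mul_Ts_add_one, g_mul_Ts_mul_Ts_add_one, g_mul_Ts_mul_Ts_add_one,
        Xc_add_one_add_one, Xc_add_one_add_one, Xc_add_one_add_one, Y_add_one, add_comm u s]
      field_simp

theorem prod_one_sub_cube_mul_eq {R : Type*} [CommRing R] (q a b c : R) :
    (1 - q ^ 3 * a) * (1 - q ^ 3 * b) * (1 - q ^ 3 * c) * (1 - q ^ 3 * (a * b * c))
      = (1 - q ^ 3) * (1 - q ^ 3 * (a * b)) * (1 - q ^ 3 * (b * c)) * (1 - q ^ 3 * (c * a))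
        + q ^ 3 * (1 - a) * (1 - b) * (1 - c) * (1 - q ^ 6 * (a * b * c)) := by
  ring

theorem Y_eq_one_add (s t u : ℕ) :
    Y s t u = 1 + x ^ 3 * br s * br t * br u * br (s + t + u + 6) /
      (br 3 * br (s + t + 3) * br (t + u + 3) * br (u + s + 3)) := by
  have hD : br 3 * br (s + t + 3) * br (t + u + 3) * br (u + s + 3) ≠ 0 := by simp
  rw [Y, one_add_div hD]
  congr 1
  simp only [br, pow_add]
  linear_combination (prod_one_sub_cube_mul_eq x (x ^ s) (x ^ t) (x ^ u)).symm

theorem Y_recursion (s t u : ℕ) :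
    Y s t u = 1 + g ^ 3 * Ts s * Ts t * Ts u
      * Xc (s + 1) (t + 1) * Xc (s + 1) (u + 1) * Xc (t + 1) (u + 1)
      * Ts (s + 1) * Ts (t + 1) * Ts (u + 1) * Y (s + 1) (t + 1) (u + 1) := by
  rw [g_pow_three_mul_Ts_Xc_Y_eq, Y_eq_one_add]
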